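/- arXiv:1501.03518 — 6 statements merged into one kernel-verified Lean document; each statement's English description precedes it below -/
import Mathlib

section
/- Let F = K_{a_1,...,a_k} with k ≥ 2 and a_1,...,a_k ≥ 1, and suppose that for each i = 1,...,k a transversal design TD(k, a_i) exists. Then the complete multipartite graph F* = K_{m·a_1,...,m·a_k}, where m = a_1·a_2·...·a_k, admits an F-decomposition, i.e., its edge set can be partitioned into edge-disjoint subgraphs each isomorphic to F. -/
open SimpleGraph Finset

/-- A decomposition of `G` into pairwise edge-disjoint (not necessarily induced) copies of `F`
covering all edges of `G`: every edge of `G` lies in the edge set of exactly one copy. -/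
def HasDecompositionInto {α β : Type} (F : SimpleGraph α) (G : SimpleGraph β) : Prop :=
  ∃ (ι : Type) (c : ι → α → β),
    (∀ t, Function.Injective (c t)) ∧
    (∀ t u v, F.Adj u v → G.Adj (c t u) (c t v)) ∧
    ∀ e ∈ G.edgeSet, ∃! t : ι, ∃ u v, F.Adj u v ∧ e = s(c t u, c t v)

/-- A decomposition of `G` into pairwise edge-disjoint *induced* copies of `F`
covering all edges of `G`. -/
def HasInducedDecompositionInto {α β : Type} (F : SimpleGraph α) (G : SimpleGraph β) : Prop :=
  ∃ (ι : Type) (c : ι → α → β),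
    (∀ t, Function.Injective (c t)) ∧
    (∀ t u v, F.Adj u v ↔ G.Adj (c t u) (c t v)) ∧
    ∀ e ∈ G.edgeSet, ∃! t : ι, ∃ u v, F.Adj u v ∧ e = s(c t u, c t v)

/-- A transversal design TD(k,n): points are `Fin k × Fin n`, the groups are the sets
`{i} × Fin n` (each of size `n`), and `B` is the collection of blocks, each a `k`-element
set of points, such that any two distinct points from the same group lie in no common
block, while any two points from different groups lie in exactly one common block. -/
def IsTransversalDesign (k n : ℕ) (B : Set (Finset (Fin k × Fin n))) : Prop :=
  (∀ b ∈ B, b.card = k) ∧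
  ∀ p q : Fin k × Fin n, p ≠ q →
    ((p.1 = q.1 → ∀ b ∈ B, ¬(p ∈ b ∧ q ∈ b)) ∧
     (p.1 ≠ q.1 → ∃! b : Finset (Fin k × Fin n), b ∈ B ∧ p ∈ b ∧ q ∈ b))

/-- Existence of a transversal design TD(k,n). -/
def TransversalDesignExists (k n : ℕ) : Prop :=
  ∃ B : Set (Finset (Fin k × Fin n)), IsTransversalDesign k n B

lemma td_point {k n : ℕ} {B : Set (Finset (Fin k × Fin n))} (h : IsTransversalDesign k n B)
    {b : Finset (Fin k × Fin n)} (hb : b ∈ B) (i : Fin k) :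
    ∃! x : Fin n, (i, x) ∈ b := by
  have hinj : Set.InjOn Prod.fst (b : Set (Fin k × Fin n)) := by
    intro p hp q hq hpq
    by_contra hne
    exact ((h.2 p q hne).1 hpq b hb) ⟨hp, hq⟩
  have hcard : (b.image Prod.fst).card = k := by
    rw [Finset.card_image_of_injOn hinj, h.1 b hb]
  have huniv : b.image Prod.fst = Finset.univ :=
    Finset.eq_univ_of_card _ (by simpa using hcard)
  have hi : i ∈ b.image Prod.fst := huniv ▸ Finset.mem_univ i
  obtain ⟨p, hp, hpi⟩ := Finset.mem_image.mp hi
  have hip : (i, p.2) = p := by rw [← hpi]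
  refine ⟨p.2, by show (i, p.2) ∈ b; rw [hip]; exact hp, ?_⟩
  intro x hx
  have : (i, x) = (i, p.2) := hinj (by exact_mod_cast hx) (by show (i,p.2) ∈ (b : Set _); rw [hip]; exact_mod_cast hp) rfl
  exact (Prod.mk.injEq _ _ _ _ ▸ this).2

/-- If `F = K_{a_1,…,a_k}` (`k ≥ 2`, all `a_i ≥ 1`) and a transversal design `TD(k, a_i)`
exists for each `i`, then `F* = K_{m·a_1,…,m·a_k}` with `m = a_1⋯a_k` admits an
`F`-decomposition. -/
theorem multipartite_decomposition_of_transversal_designs (k : ℕ) (hk : 2 ≤ k)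
    (a : Fin k → ℕ) (ha : ∀ i, 1 ≤ a i)
    (hTD : ∀ i : Fin k, TransversalDesignExists k (a i)) :
    HasDecompositionInto (completeMultipartiteGraph fun i : Fin k => Fin (a i))
      (completeMultipartiteGraph fun i : Fin k => Fin ((∏ j, a j) * a i)) := by
  classical
  choose B hB using hTD
  have tp : ∀ j (b : {b // b ∈ B j}) (i : Fin k), ∃! x : Fin (a j), (i, x) ∈ b.1 :=
    fun j b i => td_point (hB j) b.2 i
  set xf : ∀ j, {b // b ∈ B j} → Fin k → Fin (a j) := fun j b i => (tp j b i).choose with hxfdef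
  have hxf_mem : ∀ j b i, (i, xf j b i) ∈ b.1 := fun j b i => (tp j b i).choose_spec.1
  have hxf_uniq : ∀ j b i x, (i, x) ∈ b.1 → x = xf j b i :=
    fun j b i x hx => (tp j b i).choose_spec.2 x hx
  set ι := ∀ j, {b // b ∈ B j} with hι
  set c : ι → (Σ i : Fin k, Fin (a i)) → (Σ i : Fin k, Fin ((∏ j, a j) * a i)) :=
    fun g v => ⟨v.1, finProdFinEquiv (finPiFinEquiv (fun j => xf j (g j) v.1), v.2)⟩ with hc
  have extract : ∀ (g' : ι) (u : Σ i : Fin k, Fin (a i)) (i₂ : Fin k)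
      (z₂ : Fin ((∏ j, a j) * a i₂)),
      (⟨i₂, z₂⟩ : Σ i : Fin k, Fin ((∏ j, a j) * a i)) = c g' u →
      ∀ j, (i₂, finPiFinEquiv.symm (finProdFinEquiv.symm z₂).1 j) ∈ (g' j).1 := by
    rintro g' ⟨iu, yu⟩ i₂ z₂ hE j
    obtain ⟨rfl, h2⟩ := Sigma.mk.inj_iff.mp hE
    have h2' := eq_of_heq h2
    have h3 : finPiFinEquiv.symm (finProdFinEquiv.symm z₂).1 = fun j => xf j (g' j) i₂ := by
      rw [h2']; simp
    rw [show finPiFinEquiv.symm (finProdFinEquiv.symm z₂).1 j = xf j (g' j) i₂ from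
      congrFun h3 j]
    exact hxf_mem j (g' j) i₂
  refine ⟨ι, c, ?_, ?_, ?_⟩
  · rintro g ⟨i, y⟩ ⟨i', y'⟩ h
    obtain ⟨rfl, h2⟩ := Sigma.mk.inj_iff.mp h
    have h2' := finProdFinEquiv.injective (eq_of_heq h2)
    rw [Prod.ext_iff] at h2'
    exact Sigma.ext rfl (heq_of_eq h2'.2)
  · rintro g ⟨i, y⟩ ⟨i', y'⟩ h
    simpa using (by simpa using h : i ≠ i')
  · intro e he
    induction e using Sym2.ind with
    | _ v w =>
    rw [SimpleGraph.mem_edgeSet] at he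
    obtain ⟨i, z⟩ := v; obtain ⟨i', z'⟩ := w
    have hii' : i ≠ i' := by simpa using he
    set f : ∀ j, Fin (a j) := finPiFinEquiv.symm (finProdFinEquiv.symm z).1 with hf
    set f' : ∀ j, Fin (a j) := finPiFinEquiv.symm (finProdFinEquiv.symm z').1 with hf'
    set y : Fin (a i) := (finProdFinEquiv.symm z).2 with hy
    set y' : Fin (a i') := (finProdFinEquiv.symm z').2 with hy'
    have hz : z = finProdFinEquiv (finPiFinEquiv f, y) := by
      rw [hf, hy, Equiv.apply_symm_apply, Prod.mk.eta, Equiv.apply_symm_apply]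
    have hz' : z' = finProdFinEquiv (finPiFinEquiv f', y') := by
      rw [hf', hy', Equiv.apply_symm_apply, Prod.mk.eta, Equiv.apply_symm_apply]
    have hblk : ∀ j, ∃! b : Finset (Fin k × Fin (a j)),
        b ∈ B j ∧ (i, f j) ∈ b ∧ (i', f' j) ∈ b := by
      intro j
      have hpq : ((i, f j) : Fin k × Fin (a j)) ≠ (i', f' j) := by
        simp [Prod.ext_iff, hii']
      exact ((hB j).2 (i, f j) (i', f' j) hpq).2 hii'
    choose bfun hbfun using hblk
    set g : ι := fun j => ⟨bfun j, (hbfun j).1.1⟩ with hg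
    have hkey : (fun j => xf j (g j) i) = f :=
      funext fun j => (hxf_uniq j (g j) i (f j) (hbfun j).1.2.1).symm
    have hkey' : (fun j => xf j (g j) i') = f' :=
      funext fun j => (hxf_uniq j (g j) i' (f' j) (hbfun j).1.2.2).symm
    have hadj : (completeMultipartiteGraph fun i : Fin k => Fin (a i)).Adj ⟨i, y⟩ ⟨i', y'⟩ := by
      simpa using hii'
    have e1 : c g ⟨i, y⟩ = ⟨i, z⟩ := by
      show (⟨i, finProdFinEquiv (finPiFinEquiv fun j => xf j (g j) i, y)⟩ :
        Σ i : Fin k, Fin ((∏ j, a j) * a i)) = ⟨i, z⟩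
      rw [hkey, ← hz]
    have e2 : c g ⟨i', y'⟩ = ⟨i', z'⟩ := by
      show (⟨i', finProdFinEquiv (finPiFinEquiv fun j => xf j (g j) i', y')⟩ :
        Σ i : Fin k, Fin ((∏ j, a j) * a i)) = ⟨i', z'⟩
      rw [hkey', ← hz']
    have hedge : s(⟨i,z⟩, ⟨i',z'⟩) = s(c g ⟨i, y⟩, c g ⟨i', y'⟩) := by
      rw [e1, e2]
    refine ⟨g, ⟨⟨i, y⟩, ⟨i', y'⟩, hadj, hedge⟩, ?_⟩
    rintro g' ⟨u, v, huv, heq⟩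
    rw [Sym2.eq_iff] at heq
    have hmem : (∀ j, (i, f j) ∈ (g' j).1) ∧ (∀ j, (i', f' j) ∈ (g' j).1) := by
      rcases heq with ⟨h1, h2⟩ | ⟨h1, h2⟩
      · exact ⟨extract g' u i z h1, extract g' v i' z' h2⟩
      · exact ⟨extract g' v i z h1, extract g' u i' z' h2⟩
    funext j
    exact Subtype.ext ((hbfun j).2 (g' j).1 ⟨(g' j).2, hmem.1 j, hmem.2 j⟩)
end

section
/- Let F be a graph in which every vertex has a non-neighbor (i.e., for every vertex v of F there is a vertex u ≠ v not adjacent to v; in particular this holds if F has an isolated vertex and at least 2 vertices). Then for every n ≥ 2, cex(n,F) ≥ n/2. Equivalently, every graph G on n ≥ 2 vertices that admits an induced F-decomposition has at least n/2 non-adjacent vertex pairs. -/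
open SimpleGraph Finset

/-- `ex(n,F)`: the maximum number of edges of a graph on `n` vertices admitting
an induced `F`-decomposition. -/
noncomputable def exInd {α : Type} (F : SimpleGraph α) (n : ℕ) : ℕ :=
  sSup {m | ∃ G : SimpleGraph (Fin n), HasInducedDecompositionInto F G ∧ G.edgeSet.ncard = m}

/-- `cex(n,F) = C(n,2) - ex(n,F)`. -/
noncomputable def cex {α : Type} (F : SimpleGraph α) (n : ℕ) : ℕ :=
  n.choose 2 - exInd F n

/-! If `G` admits an induced `F`-decomposition, every vertex of `G` has a non-neighbour: a vertex
covered by a copy of `F` inherits one from `F` because the copy is induced, and an uncovered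
vertex is isolated. Hence `Gᶜ` has no isolated vertex, so it has at least `n / 2` edges. -/

namespace SimpleGraph

variable {α β : Type}

lemma card_edgeFinset_add_card_edgeFinset_compl [Fintype β] [DecidableEq β] (G : SimpleGraph β)
    [DecidableRel G.Adj] : #G.edgeFinset + #Gᶜ.edgeFinset = (Fintype.card β).choose 2 := by
  rw [← card_union_of_disjoint (disjoint_edgeFinset.mpr disjoint_compl_right), ← edgeFinset_sup,
    ← card_edgeFinset_top_eq_card_choose_two]
  congr!
  exact sup_compl_eq_top

lemma card_le_two_mul_card_edgeFinset [Fintype β] (H : SimpleGraph β) [DecidableRel H.Adj]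
    (h : ∀ x, ∃ y, H.Adj x y) : Fintype.card β ≤ 2 * #H.edgeFinset :=
  calc Fintype.card β = ∑ _x : β, 1 := by simp
    _ ≤ ∑ x, H.degree x := sum_le_sum fun x _ => (H.degree_pos_iff_exists_adj x).mpr (h x)
    _ = 2 * #H.edgeFinset := H.sum_degrees_eq_twice_card_edges

lemma hasInducedDecompositionInto_bot (F : SimpleGraph α) :
    HasInducedDecompositionInto F (⊥ : SimpleGraph β) :=
  ⟨Empty, Empty.elim, (·.elim), (·.elim), by simp⟩

lemma HasInducedDecompositionInto.exists_compl_adj [Nontrivial β] {F : SimpleGraph α}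
    {G : SimpleGraph β} (hF : ∀ v, ∃ u, u ≠ v ∧ ¬ F.Adj u v)
    (hG : HasInducedDecompositionInto F G) (x : β) : ∃ y, Gᶜ.Adj x y := by
  obtain ⟨ι, c, hinj, hind, hcov⟩ := hG
  by_cases hx : ∃ y, G.Adj x y
  · obtain ⟨y, hxy⟩ := hx
    obtain ⟨t, ⟨u, v, -, he⟩, -⟩ := hcov s(x, y) hxy
    obtain ⟨w, rfl⟩ : ∃ w, c t w = x := by
      rcases Sym2.eq_iff.mp he with ⟨h, -⟩ | ⟨h, -⟩
      exacts [⟨u, h.symm⟩, ⟨v, h.symm⟩]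
    obtain ⟨z, hzw, hzw'⟩ := hF w
    exact ⟨c t z, fun h => hzw (hinj t h).symm, fun h => hzw' ((hind t z w).mpr h.symm)⟩
  · obtain ⟨y, hyx⟩ := exists_ne x
    exact ⟨y, hyx.symm, fun h => hx ⟨y, h⟩⟩

lemma HasInducedDecompositionInto.two_mul_ncard_edgeSet_add_card_le [Fintype β] [Nontrivial β]
    {F : SimpleGraph α} {G : SimpleGraph β} (hF : ∀ v, ∃ u, u ≠ v ∧ ¬ F.Adj u v)
    (hG : HasInducedDecompositionInto F G) :
    2 * G.edgeSet.ncard + Fintype.card β ≤ 2 * (Fintype.card β).choose 2 := by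
  classical
  have hsplit := G.card_edgeFinset_add_card_edgeFinset_compl
  have hcompl := Gᶜ.card_le_two_mul_card_edgeFinset (hG.exists_compl_adj hF)
  rw [← coe_edgeFinset, Set.ncard_coe_finset]
  omega

end SimpleGraph

lemma two_mul_exInd_add_le {α : Type} {F : SimpleGraph α} (hF : ∀ v, ∃ u, u ≠ v ∧ ¬ F.Adj u v)
    {n : ℕ} (hn : 2 ≤ n) : 2 * exInd F n + n ≤ 2 * n.choose 2 := by
  have : Nontrivial (Fin n) := Fin.nontrivial_iff_two_le.mpr hn
  have hbound : ∀ G : SimpleGraph (Fin n), HasInducedDecompositionInto F G →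
      2 * G.edgeSet.ncard + n ≤ 2 * n.choose 2 := fun G hG => by
    simpa using hG.two_mul_ncard_edgeSet_add_card_le hF
  obtain ⟨G, hG, hmax⟩ : exInd F n ∈
      {m | ∃ G : SimpleGraph (Fin n), HasInducedDecompositionInto F G ∧ G.edgeSet.ncard = m} := by
    refine Nat.sSup_mem ⟨_, ⊥, hasInducedDecompositionInto_bot F, rfl⟩ ⟨n.choose 2, ?_⟩
    rintro _ ⟨G, hG, rfl⟩
    linarith [hbound G hG]
  simpa [hmax] using hbound G hG

theorem cex_ge_half_of_forall_nonneighbor_general {V : Type} (F : SimpleGraph V)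
    (hF : ∀ v : V, ∃ u : V, u ≠ v ∧ ¬ F.Adj u v) :
    ∀ n : ℕ, 2 ≤ n → (n : ℝ) / 2 ≤ (cex F n : ℝ) := by
  intro n hn
  have hex := two_mul_exInd_add_le hF hn
  have hcex : n ≤ cex F n * 2 := by unfold cex; omega
  rw [div_le_iff₀ two_pos]
  exact_mod_cast hcex

/-- If every vertex of `F` has a non-neighbor, then `cex(n,F) ≥ n/2` for every `n ≥ 2`. -/
theorem cex_ge_half_of_forall_nonneighbor {V : Type} [Fintype V] (F : SimpleGraph V)
    (hF : ∀ v : V, ∃ u : V, u ≠ v ∧ ¬ F.Adj u v) :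
    ∀ n : ℕ, 2 ≤ n → (n : ℝ) / 2 ≤ (cex F n : ℝ) :=
  cex_ge_half_of_forall_nonneighbor_general F hF
end

section
/- For every k ≥ 2 and every k-tuple (a_1,...,a_k) of positive integers there exists a k-tuple (a*_1,...,a*_k) of positive integers such that: (i) K_{a*_1,...,a*_k} has an embedded K_{a_1,...,a_k}-decomposition, and (ii) a transversal design TD(k, a*_i) exists for each i = 1,...,k. -/
/-!
Both parts come from orthogonal arrays `OA(k, n)`: sets of rows `Fin k → Fin n` in which any
two columns show every pair of values exactly once. The graphs of the rows are the blocks of a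
`TD(k, n)`, and for `n = p` the rows index an embedded decomposition: row `f` places a copy of
`K_{a_1,…,a_k}` on the cells `{f i} × Fin (a i)`. Over a field with at least `k` elements the
affine lines give an `OA(k, ·)`, and products of arrays are arrays (MacNeish), so an `OA(k, n)`
exists as soon as every prime power exactly dividing `n` is at least `k`. With
`p = (a_1 ⋯ a_k)^k`, every prime dividing `p * a_i` divides it at least `k` times.
-/

open SimpleGraph Finset

/-- An embedded `K_{a_1,…,a_k}`-decomposition of `K_{p·a_1,…,p·a_k}`:
there are partitions of each vertex class `V_i = Fin p × Fin (a i)` into `p` cells of size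
`a i` (given by a labelling `part i : V_i → Fin p`), and an edge decomposition of the
complete multipartite graph `K_{p·a_1,…,p·a_k}` into copies of `K_{a_1,…,a_k}` such that,
for each copy, its `i`-th partite class coincides with one of the cells of `V_i`. -/
def HasEmbeddedDecomposition (k p : ℕ) (a : Fin k → ℕ) : Prop :=
  ∃ part : (i : Fin k) → (Fin p × Fin (a i)) → Fin p,
    (∀ i j, {x : Fin p × Fin (a i) | part i x = j}.ncard = a i) ∧
    ∃ (ι : Type) (c : ι → (Σ i : Fin k, Fin (a i)) → (Σ i : Fin k, Fin p × Fin (a i))),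
      (∀ t, Function.Injective (c t)) ∧
      (∀ t (i : Fin k) (x : Fin (a i)), (c t ⟨i, x⟩).1 = i) ∧
      (∀ t (i : Fin k), ∃ j : Fin p,
        {y : Fin p × Fin (a i) | part i y = j} =
          {y : Fin p × Fin (a i) | ∃ x : Fin (a i), c t ⟨i, x⟩ = ⟨i, y⟩}) ∧
      ∀ e ∈ (completeMultipartiteGraph fun i : Fin k => Fin p × Fin (a i)).edgeSet,
        ∃! t : ι, ∃ u v, (completeMultipartiteGraph fun i : Fin k => Fin (a i)).Adj u v ∧
          e = s(c t u, c t v)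

/-- The rows of an orthogonal array `OA(k, α)` of strength 2 and index 1. -/
def IsOrthogonalArray (k : ℕ) (α : Type*) (S : Set (Fin k → α)) : Prop :=
  ∀ i j : Fin k, i ≠ j → ∀ x y : α, ∃! f, f ∈ S ∧ f i = x ∧ f j = y

def OrthogonalArrayExists (k : ℕ) (α : Type*) : Prop :=
  ∃ S : Set (Fin k → α), IsOrthogonalArray k α S

namespace IsOrthogonalArray

variable {k : ℕ} {α β : Type*}

theorem univ_of_subsingleton [Subsingleton α] : IsOrthogonalArray k α Set.univ := by
  intro i _ _ x _
  exact ⟨fun _ => x, ⟨trivial, rfl, Subsingleton.elim _ _⟩,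
    fun _ _ => funext fun _ => Subsingleton.elim _ _⟩

theorem map_equiv {S : Set (Fin k → α)} (h : IsOrthogonalArray k α S) (e : α ≃ β) :
    IsOrthogonalArray k β {g | e.symm ∘ g ∈ S} := by
  intro i j hij x y
  obtain ⟨f, ⟨hfS, hfi, hfj⟩, huniq⟩ := h i j hij (e.symm x) (e.symm y)
  refine ⟨e ∘ f, ⟨by simpa [Function.comp_def] using hfS, by simp [hfi], by simp [hfj]⟩,
    fun g ⟨hgS, hgi, hgj⟩ => ?_⟩
  have hg : e.symm ∘ g = f := huniq _ ⟨hgS, by simp [hgi], by simp [hgj]⟩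
  rw [← hg, ← Function.comp_assoc, Equiv.self_comp_symm, Function.id_comp]

theorem prod {S : Set (Fin k → α)} {T : Set (Fin k → β)}
    (hS : IsOrthogonalArray k α S) (hT : IsOrthogonalArray k β T) :
    IsOrthogonalArray k (α × β) {h | Prod.fst ∘ h ∈ S ∧ Prod.snd ∘ h ∈ T} := by
  intro i j hij x y
  obtain ⟨f, ⟨hfS, hfi, hfj⟩, hfu⟩ := hS i j hij x.1 y.1
  obtain ⟨g, ⟨hgT, hgi, hgj⟩, hgu⟩ := hT i j hij x.2 y.2
  refine ⟨fun i => (f i, g i), ⟨⟨hfS, hgT⟩, by simp [hfi, hgi], by simp [hfj, hgj]⟩, ?_⟩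
  rintro h ⟨⟨hS', hT'⟩, rfl, rfl⟩
  have hf : Prod.fst ∘ h = f := hfu _ ⟨hS', rfl, rfl⟩
  have hg : Prod.snd ∘ h = g := hgu _ ⟨hT', rfl, rfl⟩
  ext t
  · exact congrFun hf t
  · exact congrFun hg t

/-- The affine lines `i ↦ s * ι i + t` over a field: two points with distinct abscissae lie
on exactly one of them. -/
theorem affineLines {F : Type*} [Field F] (ι : Fin k ↪ F) :
    IsOrthogonalArray k F (Set.range fun st : F × F => fun i => st.1 * ι i + st.2) := by
  intro i j hij x y
  have hne : ι i - ι j ≠ 0 := sub_ne_zero.mpr (ι.injective.ne hij)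
  obtain ⟨s, hs⟩ : ∃ s, s * (ι i - ι j) = x - y := ⟨_, div_mul_cancel₀ _ hne⟩
  refine ⟨fun l => s * ι l + (x - s * ι i), ⟨⟨(s, x - s * ι i), rfl⟩, by ring,
    by linear_combination -hs⟩, ?_⟩
  rintro _ ⟨⟨⟨s', t'⟩, rfl⟩, hi, hj⟩
  have hs' : s' = s := mul_right_cancel₀ hne (by linear_combination hi - hj - hs)
  subst hs'
  funext l
  linear_combination hi

end IsOrthogonalArray

namespace OrthogonalArrayExists

variable {k : ℕ} {α β : Type*}

theorem of_equiv (h : OrthogonalArrayExists k α) (e : α ≃ β) : OrthogonalArrayExists k β :=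
  let ⟨_, hS⟩ := h
  ⟨_, hS.map_equiv e⟩

theorem prod (hα : OrthogonalArrayExists k α) (hβ : OrthogonalArrayExists k β) :
    OrthogonalArrayExists k (α × β) :=
  let ⟨_, hS⟩ := hα
  let ⟨_, hT⟩ := hβ
  ⟨_, hS.prod hT⟩

theorem of_field (F : Type*) [Field F] [Finite F] (hk : k ≤ Nat.card F) :
    OrthogonalArrayExists k F :=
  ⟨_, IsOrthogonalArray.affineLines <|
    (Fin.castLEEmb hk).trans (Finite.equivFin F).symm.toEmbedding⟩

theorem fin_primePow {q e : ℕ} (hq : q.Prime) (he : e ≠ 0) (hk : k ≤ q ^ e) :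
    OrthogonalArrayExists k (Fin (q ^ e)) := by
  have : Fact q.Prime := ⟨hq⟩
  have hcard := GaloisField.card q e he
  exact (of_field _ (hcard ▸ hk)).of_equiv (Finite.equivFinOfCardEq hcard)

theorem fin_prod {ι : Type*} (s : Finset ι) (n : ι → ℕ)
    (h : ∀ i ∈ s, OrthogonalArrayExists k (Fin (n i))) :
    OrthogonalArrayExists k (Fin (∏ i ∈ s, n i)) := by
  classical
  induction s using Finset.induction_on with
  | empty =>
    rw [Finset.prod_empty]
    exact ⟨_, IsOrthogonalArray.univ_of_subsingleton⟩
  | insert i s hi ih =>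
    rw [Finset.prod_insert hi]
    have hs : OrthogonalArrayExists k (Fin (∏ j ∈ s, n j)) :=
      ih fun j hj => h j (mem_insert_of_mem hj)
    exact ((h i (mem_insert_self i s)).prod hs).of_equiv finProdFinEquiv

theorem fin_of_le_ordProj {n : ℕ} (hn : n ≠ 0)
    (h : ∀ q ∈ n.primeFactors, k ≤ q ^ n.factorization q) :
    OrthogonalArrayExists k (Fin n) := by
  have hprod : ∏ q ∈ n.primeFactors, q ^ n.factorization q = n := by
    conv_rhs => rw [← Nat.prod_factorization_pow_eq_self hn]
    rw [Finsupp.prod, Nat.support_factorization]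
  rw [← hprod]
  refine fin_prod _ _ fun q hq => fin_primePow (Nat.prime_of_mem_primeFactors hq) ?_ (h q hq)
  rwa [← Finsupp.mem_support_iff, Nat.support_factorization]

end OrthogonalArrayExists

section TransversalDesign

variable {k n : ℕ}

def graphFinset (f : Fin k → Fin n) : Finset (Fin k × Fin n) :=
  univ.image fun i => (i, f i)

theorem mem_graphFinset {f : Fin k → Fin n} {r : Fin k × Fin n} :
    r ∈ graphFinset f ↔ f r.1 = r.2 := by
  simp [graphFinset, Prod.ext_iff, eq_comm]

theorem card_graphFinset (f : Fin k → Fin n) : (graphFinset f).card = k := by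
  rw [graphFinset, card_image_of_injective _ fun i j h => congrArg Prod.fst h, card_univ,
    Fintype.card_fin]

theorem IsOrthogonalArray.isTransversalDesign {S : Set (Fin k → Fin n)}
    (hS : IsOrthogonalArray k (Fin n) S) : IsTransversalDesign k n (graphFinset '' S) := by
  refine ⟨fun _ ⟨f, _, hf⟩ => hf ▸ card_graphFinset f, fun p q hpq => ⟨?_, fun hne => ?_⟩⟩
  · rintro hEq _ ⟨f, -, rfl⟩ ⟨hp, hq⟩
    rw [mem_graphFinset] at hp hq
    exact hpq (Prod.ext hEq (by rw [← hp, ← hq, hEq]))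
  · obtain ⟨f, ⟨hfS, hfp, hfq⟩, hfu⟩ := hS p.1 q.1 hne p.2 q.2
    refine ⟨graphFinset f, ⟨⟨f, hfS, rfl⟩, mem_graphFinset.2 hfp, mem_graphFinset.2 hfq⟩,
      ?_⟩
    rintro _ ⟨⟨g, hgS, rfl⟩, hp, hq⟩
    rw [hfu g ⟨hgS, mem_graphFinset.1 hp, mem_graphFinset.1 hq⟩]

end TransversalDesign

section EmbeddedDecomposition

variable {k p : ℕ} {a : Fin k → ℕ}

def rowCopy (a : Fin k → ℕ) (f : Fin k → Fin p) : (Σ i, Fin (a i)) → Σ i, Fin p × Fin (a i) :=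
  Sigma.map id fun i x => (f i, x)

@[simp]
theorem rowCopy_mk (f : Fin k → Fin p) (i : Fin k) (x : Fin (a i)) :
    rowCopy a f ⟨i, x⟩ = ⟨i, (f i, x)⟩ :=
  rfl

theorem rowCopy_injective (f : Fin k → Fin p) : Function.Injective (rowCopy a f) :=
  Function.injective_id.sigma_map fun i => Prod.mk_right_injective (f i)

theorem apply_eq_of_rowCopy_eq {f : Fin k → Fin p} {u : Σ i, Fin (a i)} {i : Fin k}
    {y : Fin p × Fin (a i)} (h : rowCopy a f u = ⟨i, y⟩) : f i = y.1 := by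
  obtain ⟨rfl, h⟩ := Sigma.mk.inj_iff.mp h
  exact congrArg Prod.fst (eq_of_heq h)

theorem ncard_fst_eq (j : Fin p) (m : ℕ) : {x : Fin p × Fin m | x.1 = j}.ncard = m := by
  have : {x : Fin p × Fin m | x.1 = j} = {j} ×ˢ Set.univ := by ext; simp
  rw [this, Set.ncard_prod, Set.ncard_singleton, Set.ncard_univ, Nat.card_fin, one_mul]

/-- An edge between cell `s` of class `i` and cell `s'` of class `i'` lies in the copy of
exactly one row, the one with `f i = s` and `f i' = s'`. -/
theorem IsOrthogonalArray.hasEmbeddedDecomposition {S : Set (Fin k → Fin p)}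
    (hS : IsOrthogonalArray k (Fin p) S) (a : Fin k → ℕ) : HasEmbeddedDecomposition k p a := by
  refine ⟨fun _ x => x.1, fun i j => ncard_fst_eq j (a i), S, fun f => rowCopy a f,
    fun f => rowCopy_injective f.1, fun _ _ _ => rfl, fun f i => ⟨f.1 i, ?_⟩, ?_⟩
  · ext y
    simp [Prod.ext_iff, eq_comm]
  · intro e he
    induction e using Sym2.ind with
    | _ u v =>
      obtain ⟨i, s, x⟩ := u
      obtain ⟨i', s', x'⟩ := v
      have hne : i ≠ i' := he
      obtain ⟨f, ⟨hfS, hfi, hfi'⟩, hfu⟩ := hS i i' hne s s'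
      refine ⟨⟨f, hfS⟩, ⟨⟨i, x⟩, ⟨i', x'⟩, hne, by simp [hfi, hfi']⟩, ?_⟩
      rintro ⟨g, hgS⟩ ⟨_, _, -, hsym⟩
      rcases Sym2.eq_iff.mp hsym with ⟨h, h'⟩ | ⟨h, h'⟩ <;>
        exact Subtype.ext (hfu g ⟨hgS, apply_eq_of_rowCopy_eq h.symm,
          apply_eq_of_rowCopy_eq h'.symm⟩)

end EmbeddedDecomposition

theorem Nat.le_pow_factorization_of_pow_dvd {q n k : ℕ} (hq : q.Prime) (hn : n ≠ 0)
    (h : q ^ k ∣ n) : k ≤ q ^ n.factorization q :=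
  calc k ≤ 2 ^ k := Nat.lt_two_pow_self.le
    _ ≤ q ^ k := Nat.pow_le_pow_left hq.two_le k
    _ ≤ q ^ n.factorization q :=
      Nat.pow_le_pow_right hq.pos ((hq.pow_dvd_iff_le_factorization hn).1 h)

theorem OrthogonalArrayExists.fin_pow_mul {N c : ℕ} (hN : N ≠ 0) (hc : c ∣ N) (k : ℕ) :
    OrthogonalArrayExists k (Fin (N ^ k * c)) := by
  have hn : N ^ k * c ≠ 0 := mul_ne_zero (pow_ne_zero k hN) (ne_zero_of_dvd_ne_zero hN hc)
  refine fin_of_le_ordProj hn fun q hq => ?_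
  have hqp := Nat.prime_of_mem_primeFactors hq
  have hqN : q ∣ N := hqp.dvd_of_dvd_pow (n := k + 1)
    ((Nat.dvd_of_mem_primeFactors hq).trans (pow_succ N k ▸ mul_dvd_mul_left _ hc))
  exact Nat.le_pow_factorization_of_pow_dvd hqp hn ((pow_dvd_pow_of_dvd hqN k).mul_right c)

theorem exists_multiple_with_embedded_decomposition_and_TD_general (k : ℕ)
    (a : Fin k → ℕ) (ha : ∀ i, 1 ≤ a i) :
    ∃ p : ℕ, 0 < p ∧ HasEmbeddedDecomposition k p a ∧
      ∀ i : Fin k, TransversalDesignExists k (p * a i) := by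
  have hN : ∏ i, a i ≠ 0 := (prod_pos fun i _ => ha i).ne'
  refine ⟨(∏ i, a i) ^ k, Nat.pos_of_ne_zero (pow_ne_zero k hN), ?_, fun i => ?_⟩
  · obtain ⟨S, hS⟩ :=
      (OrthogonalArrayExists.fin_pow_mul hN (one_dvd _) k).of_equiv (finCongr (mul_one _))
    exact hS.hasEmbeddedDecomposition a
  · obtain ⟨S, hS⟩ := OrthogonalArrayExists.fin_pow_mul hN (dvd_prod_of_mem a (mem_univ i)) k
    exact ⟨_, hS.isTransversalDesign⟩

/-- For every `k ≥ 2` and every `k`-tuple `(a_1,…,a_k)` of positive integers there is a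
`k`-tuple `(a*_1,…,a*_k) = (p·a_1,…,p·a_k)` of positive integers such that
`K_{a*_1,…,a*_k}` has an embedded `K_{a_1,…,a_k}`-decomposition and a transversal design
`TD(k, a*_i)` exists for each `i`. -/
theorem exists_multiple_with_embedded_decomposition_and_TD (k : ℕ) (hk : 2 ≤ k)
    (a : Fin k → ℕ) (ha : ∀ i, 1 ≤ a i) :
    ∃ p : ℕ, 0 < p ∧ HasEmbeddedDecomposition k p a ∧
      ∀ i : Fin k, TransversalDesignExists k (p * a i) :=
  exists_multiple_with_embedded_decomposition_and_TD_general k a ha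
end

section
/- Let F = K_{a_1,...,a_k} with k ≥ 2 and a_1,...,a_k ≥ 1, and let p be a positive integer divisible by each a_i. Suppose that the complete graph K_N admits an edge decomposition into (not necessarily induced) subgraphs isomorphic to F, and that K_{p·a_1,...,p·a_k} admits an embedded F-decomposition. Then the complete N-partite graph with all N parts of size p (equivalently, the graph obtained from K_{N·p} by deleting the edges of N pairwise disjoint copies of K_p) admits an induced F-decomposition. -/
open SimpleGraph Finset

lemma sigma_snd_eq {k p : ℕ} {a : Fin k → ℕ}
    (s : Σ i : Fin k, Fin p × Fin (a i)) (i : Fin k) (h : s.1 = i) :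
    s = ⟨i, h ▸ s.2⟩ := by cases s; cases h; rfl

noncomputable def psi {k p : ℕ} {a : Fin k → ℕ} (hdvd : ∀ i, a i ∣ p)
    (part : (i : Fin k) → (Fin p × Fin (a i)) → Fin p)
    (hpart : ∀ i j, {x : Fin p × Fin (a i) | part i x = j}.ncard = a i) (i : Fin k) :
    (Fin p × Fin (a i)) ≃ (Fin (a i) × Fin p) :=
  ((Equiv.sigmaFiberEquiv (part i)).symm.trans
    ((Equiv.sigmaCongrRight fun j =>
        (Finite.equivFinOfCardEq
          ((Nat.card_coe_set_eq {x : Fin p × Fin (a i) | part i x = j}).trans (hpart i j)))).trans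
      ((Equiv.sigmaEquivProd (Fin p) (Fin (a i))).trans
        ((((finCongr (Nat.mul_div_cancel' (hdvd i)).symm).trans
            finProdFinEquiv.symm).prodCongr (Equiv.refl (Fin (a i)))).trans
          ((Equiv.prodAssoc _ _ _).trans
            ((Equiv.refl (Fin (a i))).prodCongr
              (finProdFinEquiv.trans (finCongr (Nat.div_mul_cancel (hdvd i))))))))))

lemma psi_fst {k p : ℕ} {a : Fin k → ℕ} (hdvd : ∀ i, a i ∣ p)
    (part : (i : Fin k) → (Fin p × Fin (a i)) → Fin p)
    (hpart : ∀ i j, {x : Fin p × Fin (a i) | part i x = j}.ncard = a i) (i : Fin k)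
    (y : Fin p × Fin (a i)) :
    (psi hdvd part hpart i y).1 =
      (finProdFinEquiv.symm (finCongr (Nat.mul_div_cancel' (hdvd i)).symm (part i y))).1 := rfl

lemma psi_fst_eq {k p : ℕ} {a : Fin k → ℕ} (hdvd : ∀ i, a i ∣ p)
    (part : (i : Fin k) → (Fin p × Fin (a i)) → Fin p)
    (hpart : ∀ i j, {x : Fin p × Fin (a i) | part i x = j}.ncard = a i) (i : Fin k)
    {y y' : Fin p × Fin (a i)} (h : part i y = part i y') :
    (psi hdvd part hpart i y).1 = (psi hdvd part hpart i y').1 := by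
  rw [psi_fst, psi_fst, h]

private theorem aux_main (k : ℕ) (hk : 2 ≤ k)
    (a : Fin k → ℕ) (ha : ∀ i, 1 ≤ a i) (p : ℕ) (hp : 0 < p) (hdvd : ∀ i, a i ∣ p)
    (N : ℕ)
    (ψ : (i : Fin k) → (Fin p × Fin (a i)) ≃ (Fin (a i) × Fin p))
    (part : (i : Fin k) → (Fin p × Fin (a i)) → Fin p)
    (hψ : ∀ i (y y' : Fin p × Fin (a i)), part i y = part i y' → (ψ i y).1 = (ψ i y').1)
    (ι₀ : Type) (c₀ : ι₀ → (Σ i : Fin k, Fin (a i)) → Fin N)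
    (inj₀ : ∀ t, Function.Injective (c₀ t))
    (cover₀ : ∀ e ∈ (⊤ : SimpleGraph (Fin N)).edgeSet, ∃! t : ι₀, ∃ u v,
      (completeMultipartiteGraph fun i : Fin k => Fin (a i)).Adj u v ∧ e = s(c₀ t u, c₀ t v))
    (ι₁ : Type) (c₁ : ι₁ → (Σ i : Fin k, Fin (a i)) → (Σ i : Fin k, Fin p × Fin (a i)))
    (inj₁ : ∀ t, Function.Injective (c₁ t))
    (d : ι₁ → (i : Fin k) → Fin (a i) → Fin p × Fin (a i))
    (hd : ∀ t i x, c₁ t ⟨i, x⟩ = ⟨i, d t i x⟩)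
    (cls₁ : ∀ t (i : Fin k), ∃ j : Fin p,
        {y : Fin p × Fin (a i) | part i y = j} =
          {y : Fin p × Fin (a i) | ∃ x : Fin (a i), c₁ t ⟨i, x⟩ = ⟨i, y⟩})
    (cover₁ : ∀ e ∈ (completeMultipartiteGraph fun i : Fin k => Fin p × Fin (a i)).edgeSet,
        ∃! t : ι₁, ∃ u v, (completeMultipartiteGraph fun i : Fin k => Fin (a i)).Adj u v ∧
          e = s(c₁ t u, c₁ t v)) :
    HasInducedDecompositionInto (completeMultipartiteGraph fun i : Fin k => Fin (a i))
      (completeMultipartiteGraph fun _ : Fin N => Fin p) := by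
  classical
  -- cell constancy of the first coordinate of ψ ∘ d
  have hcell : ∀ t i x x', (ψ i (d t i x)).1 = (ψ i (d t i x')).1 := by
    intro t i x x'
    obtain ⟨j, hj⟩ := cls₁ t i
    have hx : part i (d t i x) = j := by
      have : d t i x ∈ {y : Fin p × Fin (a i) | part i y = j} := by
        rw [hj]; exact ⟨x, hd t i x⟩
      exact this
    have hx' : part i (d t i x') = j := by
      have : d t i x' ∈ {y : Fin p × Fin (a i) | part i y = j} := by
        rw [hj]; exact ⟨x', hd t i x'⟩
      exact this
    exact hψ i _ _ (hx.trans hx'.symm)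
  -- evaluation lemma for the composite copy map
  have hCval : ∀ (s₀ : ι₀) (s₁ : ι₁) (iw : Fin k) (xw : Fin (a iw)) (i0 : Fin k)
      (y0 : Fin p × Fin (a i0)), c₁ s₁ ⟨iw, xw⟩ = ⟨i0, y0⟩ →
      (⟨c₀ s₀ ⟨iw, (ψ iw (d s₁ iw xw)).1⟩, (ψ iw (d s₁ iw xw)).2⟩ :
        Σ _ : Fin N, Fin p) = ⟨c₀ s₀ ⟨i0, (ψ i0 y0).1⟩, (ψ i0 y0).2⟩ := by
    intro s₀ s₁ iw xw i0 y0 hw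
    have h : (⟨iw, d s₁ iw xw⟩ : Σ i : Fin k, Fin p × Fin (a i)) = ⟨i0, y0⟩ := by
      rw [← hd]; exact hw
    obtain ⟨rfl, h2⟩ := Sigma.mk.inj_iff.mp h
    rw [eq_of_heq h2]
  refine ⟨ι₀ × ι₁,
    fun t s => ⟨c₀ t.1 ⟨s.1, (ψ s.1 (d t.2 s.1 s.2)).1⟩, (ψ s.1 (d t.2 s.1 s.2)).2⟩,
    ?_, ?_, ?_⟩
  · -- injectivity
    rintro ⟨t₀, t₁⟩ ⟨i, x⟩ ⟨i', x'⟩ h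
    simp only [Sigma.mk.inj_iff] at h
    obtain ⟨h1, h2⟩ := h
    have h3 := inj₀ t₀ h1
    obtain ⟨h4, h5⟩ : i = i' ∧ HEq (ψ i (d t₁ i x)).1 (ψ i' (d t₁ i' x')).1 := by
      simpa only [Sigma.mk.inj_iff] using h3
    subst h4
    have h6 : ψ i (d t₁ i x) = ψ i (d t₁ i x') := Prod.ext (eq_of_heq h5) (eq_of_heq h2)
    have h7 : d t₁ i x = d t₁ i x' := (ψ i).injective h6
    exact inj₁ t₁ (by rw [hd, hd, h7])
  · -- induced adjacency
    rintro ⟨t₀, t₁⟩ ⟨i, x⟩ ⟨i', x'⟩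
    simp only [comap_adj, top_adj]
    constructor
    · intro hne hc
      exact hne (congrArg Sigma.fst (inj₀ t₀ hc))
    · intro hne hii
      apply hne
      subst hii
      rw [hcell t₁ i x x']
  · -- edge cover
    intro e he
    induction e using Sym2.ind with
    | _ w₁ w₂ =>
    obtain ⟨n, q⟩ := w₁
    obtain ⟨n', q'⟩ := w₂
    rw [mem_edgeSet] at he
    have hnn : n ≠ n' := he
    obtain ⟨t₀, ht₀, huniq₀⟩ := cover₀ s(n, n') (by rwa [mem_edgeSet, top_adj])
    obtain ⟨u₀, v₀, hadj₀, hu₀, hv₀⟩ :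
        ∃ u v, (completeMultipartiteGraph fun i : Fin k => Fin (a i)).Adj u v ∧
          c₀ t₀ u = n ∧ c₀ t₀ v = n' := by
      obtain ⟨u₀, v₀, hadj₀, he₀⟩ := ht₀
      rcases Sym2.eq_iff.mp he₀ with ⟨h1, h2⟩ | ⟨h1, h2⟩
      · exact ⟨u₀, v₀, hadj₀, h1.symm, h2.symm⟩
      · exact ⟨v₀, u₀, hadj₀.symm, h1.symm, h2.symm⟩
    obtain ⟨i, z⟩ := u₀
    obtain ⟨i', z'⟩ := v₀
    have hii : i ≠ i' := hadj₀
    obtain ⟨t₁, ht₁, huniq₁⟩ :=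
      cover₁ s(⟨i, (ψ i).symm (z, q)⟩, ⟨i', (ψ i').symm (z', q')⟩) (by
        rw [mem_edgeSet]; exact hii)
    obtain ⟨u, v, hadjuv, hu, hv⟩ :
        ∃ u v, (completeMultipartiteGraph fun i : Fin k => Fin (a i)).Adj u v ∧
          c₁ t₁ u = ⟨i, (ψ i).symm (z, q)⟩ ∧ c₁ t₁ v = ⟨i', (ψ i').symm (z', q')⟩ := by
      obtain ⟨u, v, hadjuv, he₁⟩ := ht₁
      rcases Sym2.eq_iff.mp he₁ with ⟨h1, h2⟩ | ⟨h1, h2⟩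
      · exact ⟨u, v, hadjuv, h1.symm, h2.symm⟩
      · exact ⟨v, u, hadjuv.symm, h1.symm, h2.symm⟩
    obtain ⟨iu0, xu0⟩ := u
    obtain ⟨iv0, xv0⟩ := v
    refine ⟨(t₀, t₁), ⟨⟨iu0, xu0⟩, ⟨iv0, xv0⟩, hadjuv, ?_⟩, ?_⟩
    · have h1 := hCval t₀ t₁ iu0 xu0 i _ hu
      have h2 := hCval t₀ t₁ iv0 xv0 i' _ hv
      show s(⟨n, q⟩, ⟨n', q'⟩) =
        s((⟨c₀ t₀ ⟨iu0, (ψ iu0 (d t₁ iu0 xu0)).1⟩, (ψ iu0 (d t₁ iu0 xu0)).2⟩ :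
            Σ _ : Fin N, Fin p),
          ⟨c₀ t₀ ⟨iv0, (ψ iv0 (d t₁ iv0 xv0)).1⟩, (ψ iv0 (d t₁ iv0 xv0)).2⟩)
      rw [h1, h2, Equiv.apply_symm_apply, Equiv.apply_symm_apply, hu₀, hv₀]
    · rintro ⟨s₀, s₁⟩ ⟨u', v', hadj', he'⟩
      obtain ⟨u', v', hadj', hcu, hcv⟩ :
          ∃ uu vv, (completeMultipartiteGraph fun i : Fin k => Fin (a i)).Adj uu vv ∧
            (⟨c₀ s₀ ⟨uu.1, (ψ uu.1 (d s₁ uu.1 uu.2)).1⟩, (ψ uu.1 (d s₁ uu.1 uu.2)).2⟩ :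
              Σ _ : Fin N, Fin p) = ⟨n, q⟩ ∧
            (⟨c₀ s₀ ⟨vv.1, (ψ vv.1 (d s₁ vv.1 vv.2)).1⟩, (ψ vv.1 (d s₁ vv.1 vv.2)).2⟩ :
              Σ _ : Fin N, Fin p) = ⟨n', q'⟩ := by
        rcases Sym2.eq_iff.mp he' with ⟨h1, h2⟩ | ⟨h1, h2⟩
        · exact ⟨u', v', hadj', h1.symm, h2.symm⟩
        · exact ⟨v', u', hadj'.symm, h1.symm, h2.symm⟩
      obtain ⟨iu, xu⟩ := u'
      obtain ⟨iv, xv⟩ := v'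
      -- first components
      obtain ⟨hcu1, hcu2⟩ : c₀ s₀ ⟨iu, (ψ iu (d s₁ iu xu)).1⟩ = n ∧
          HEq (ψ iu (d s₁ iu xu)).2 q := by simpa only [Sigma.mk.inj_iff] using hcu
      obtain ⟨hcv1, hcv2⟩ : c₀ s₀ ⟨iv, (ψ iv (d s₁ iv xv)).1⟩ = n' ∧
          HEq (ψ iv (d s₁ iv xv)).2 q' := by simpa only [Sigma.mk.inj_iff] using hcv
      -- s₀ = t₀
      have hs₀ : s₀ = t₀ := by
        refine huniq₀ s₀ ⟨⟨iu, (ψ iu (d s₁ iu xu)).1⟩, ⟨iv, (ψ iv (d s₁ iv xv)).1⟩,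
          hadj', ?_⟩
        rw [hcu1, hcv1]
      subst hs₀
      -- identify the images under c₁
      obtain ⟨h4, h5⟩ : iu = i ∧ HEq (ψ iu (d s₁ iu xu)).1 z := by
        simpa only [Sigma.mk.inj_iff] using inj₀ s₀ (hcu1.trans hu₀.symm)
      subst h4
      obtain ⟨h6, h7⟩ : iv = i' ∧ HEq (ψ iv (d s₁ iv xv)).1 z' := by
        simpa only [Sigma.mk.inj_iff] using inj₀ s₀ (hcv1.trans hv₀.symm)
      subst h6
      have hdu : d s₁ iu xu = (ψ iu).symm (z, q) := by
        apply (ψ iu).injective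
        rw [Equiv.apply_symm_apply]
        exact Prod.ext (eq_of_heq h5) (eq_of_heq hcu2)
      have hdv : d s₁ iv xv = (ψ iv).symm (z', q') := by
        apply (ψ iv).injective
        rw [Equiv.apply_symm_apply]
        exact Prod.ext (eq_of_heq h7) (eq_of_heq hcv2)
      have hs₁ : s₁ = t₁ := by
        refine huniq₁ s₁ ⟨⟨iu, xu⟩, ⟨iv, xv⟩, hadj', ?_⟩
        rw [hd s₁ iu xu, hd s₁ iv xv, hdu, hdv]
      rw [hs₁]

/-- Let `F = K_{a_1,…,a_k}` (`k ≥ 2`, all `a_i ≥ 1`) and let `p > 0` be divisible by each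
`a_i`. If the complete graph `K_N` admits an edge decomposition into copies of `F` and
`K_{p·a_1,…,p·a_k}` admits an embedded `F`-decomposition, then the complete `N`-partite
graph with all parts of size `p` admits an induced `F`-decomposition. -/
theorem induced_decomposition_of_blowup (k : ℕ) (hk : 2 ≤ k)
    (a : Fin k → ℕ) (ha : ∀ i, 1 ≤ a i) (p : ℕ) (hp : 0 < p) (hdvd : ∀ i, a i ∣ p)
    (N : ℕ)
    (hKN : HasDecompositionInto (completeMultipartiteGraph fun i : Fin k => Fin (a i))
      (⊤ : SimpleGraph (Fin N)))
    (hemb : HasEmbeddedDecomposition k p a) :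
    HasInducedDecompositionInto (completeMultipartiteGraph fun i : Fin k => Fin (a i))
      (completeMultipartiteGraph fun _ : Fin N => Fin p) := by
  obtain ⟨ι₀, c₀, inj₀, adj₀, cover₀⟩ := hKN
  obtain ⟨part, hpart, ι₁, c₁, inj₁, fst₁, cls₁, cover₁⟩ := hemb
  exact aux_main k hk a ha p hp hdvd N (psi hdvd part hpart) part
    (fun i y y' h => psi_fst_eq hdvd part hpart i h) ι₀ c₀ inj₀ cover₀ ι₁ c₁ inj₁
    (fun t i x => fst₁ t i x ▸ (c₁ t ⟨i, x⟩).2)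
    (fun t i x => sigma_snd_eq (c₁ t ⟨i, x⟩) i (fst₁ t i x)) cls₁ cover₁
end

section
/- Let F be a graph and let F' be the graph obtained from F by adding one isolated vertex. Then for every n ≥ |V(F')|, cex(n,F) ≤ cex(n,F') ≤ cex(n−1,F) + n − 1. -/
open SimpleGraph Finset

/-- The graph obtained from `F` by adding one isolated vertex (`none`). -/
def addIsolated {V : Type} (F : SimpleGraph V) : SimpleGraph (Option V) :=
  SimpleGraph.fromRel fun u v => ∃ x y : V, u = some x ∧ v = some y ∧ F.Adj x y

lemma addIsolated_adj_iff {V : Type} (F : SimpleGraph V) (u v : Option V) :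
    (addIsolated F).Adj u v ↔ ∃ x y : V, u = some x ∧ v = some y ∧ F.Adj x y := by
  constructor
  · rintro ⟨hne, h | ⟨x, y, hx, hy, hxy⟩⟩
    · exact h
    · exact ⟨y, x, hy, hx, hxy.symm⟩
  · rintro ⟨x, y, rfl, rfl, hxy⟩
    exact ⟨by simpa using hxy.ne, Or.inl ⟨x, y, rfl, rfl, hxy⟩⟩

lemma addIsolated_adj_some {V : Type} (F : SimpleGraph V) (x y : V) :
    (addIsolated F).Adj (some x) (some y) ↔ F.Adj x y := by
  rw [addIsolated_adj_iff]
  constructor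
  · rintro ⟨a, b, ha, hb, hab⟩
    simp only [Option.some.injEq] at ha hb
    subst ha; subst hb; exact hab
  · intro h; exact ⟨x, y, rfl, rfl, h⟩

lemma edge_card_le {n : ℕ} (G : SimpleGraph (Fin n)) : G.edgeSet.ncard ≤ n.choose 2 := by
  classical
  haveI : Fintype G.edgeSet := Fintype.ofFinite _
  rw [← SimpleGraph.coe_edgeFinset, Set.ncard_coe_finset]
  simpa using G.card_edgeFinset_le_card_choose_two

lemma exIndSet_bddAbove {α : Type} (F : SimpleGraph α) (n : ℕ) :
    BddAbove {m | ∃ G : SimpleGraph (Fin n),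
      HasInducedDecompositionInto F G ∧ G.edgeSet.ncard = m} := by
  refine ⟨n.choose 2, ?_⟩
  rintro m ⟨G, -, rfl⟩
  exact edge_card_le G

lemma exInd_le_choose {α : Type} (F : SimpleGraph α) (n : ℕ) :
    exInd F n ≤ n.choose 2 := by
  refine csSup_le ⟨0, ⊥, ⟨Empty, fun t => t.elim, fun t => t.elim, fun t => t.elim,
    fun e he => by simp at he⟩, by simp⟩ ?_
  rintro m ⟨G, -, rfl⟩
  exact edge_card_le G

/-- Forgetting the isolated vertex: a graph decomposable into induced copies of
`addIsolated F` is decomposable into induced copies of `F`. -/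
lemma hasInduced_of_addIsolated {V β : Type} {F : SimpleGraph V} {G : SimpleGraph β}
    (h : HasInducedDecompositionInto (addIsolated F) G) :
    HasInducedDecompositionInto F G := by
  obtain ⟨ι, c, hinj, hadj, hcov⟩ := h
  refine ⟨ι, fun t x => c t (some x), ?_, ?_, ?_⟩
  · intro t a b hab
    have := hinj t hab
    simpa using this
  · intro t u v
    rw [← addIsolated_adj_some F u v]
    exact hadj t (some u) (some v)
  · intro e he
    obtain ⟨t, ⟨u, v, huv, hev⟩, huniq⟩ := hcov e he
    obtain ⟨x, y, rfl, rfl, hxy⟩ := (addIsolated_adj_iff F u v).mp huv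
    refine ⟨t, ⟨x, y, hxy, hev⟩, ?_⟩
    rintro t' ⟨a, b, hab, heab⟩
    exact huniq t' ⟨some a, some b, (addIsolated_adj_some F a b).mpr hab, heab⟩

lemma exInd_addIsolated_le {V : Type} (F : SimpleGraph V) (n : ℕ) :
    exInd (addIsolated F) n ≤ exInd F n := by
  apply csSup_le_csSup' (exIndSet_bddAbove F n)
  rintro m ⟨G, hG, rfl⟩
  exact ⟨G, hasInduced_of_addIsolated hG, rfl⟩

lemma edgeSet_map' {α β : Type} (G : SimpleGraph α) (f : α ↪ β) :
    (G.map f).edgeSet = Sym2.map f '' G.edgeSet := by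
  ext e
  induction e using Sym2.ind with
  | _ a b =>
    simp only [SimpleGraph.mem_edgeSet, SimpleGraph.map_adj, Set.mem_image]
    constructor
    · rintro ⟨u, v, huv, rfl, rfl⟩
      exact ⟨s(u, v), huv, rfl⟩
    · rintro ⟨e', he', hmap⟩
      induction e' using Sym2.ind with
      | _ u v =>
        rw [Sym2.map_pair_eq, Sym2.eq_iff] at hmap
        rcases hmap with ⟨rfl, rfl⟩ | ⟨rfl, rfl⟩
        · exact ⟨u, v, he', rfl, rfl⟩
        · exact ⟨v, u, he'.symm, rfl, rfl⟩

lemma exInd_pred_le {V : Type} (F : SimpleGraph V) (n : ℕ) (hn : 1 ≤ n) :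
    exInd F (n - 1) ≤ exInd (addIsolated F) n := by
  apply csSup_le_csSup' (exIndSet_bddAbove (addIsolated F) n)
  rintro m ⟨G, ⟨ι, c, hinj, hadj, hcov⟩, rfl⟩
  set f : Fin (n - 1) ↪ Fin n := Fin.castLEEmb (Nat.sub_le n 1) with hf
  have hw : n - 1 < n := by omega
  set w : Fin n := ⟨n - 1, hw⟩ with hwdef
  have hfw : ∀ a : Fin (n - 1), f a ≠ w := by
    intro a h
    have : (f a : ℕ) = n - 1 := congrArg Fin.val h
    have ha : (f a : ℕ) = (a : ℕ) := rfl
    omega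
  refine ⟨G.map f, ⟨ι, fun t o => o.elim w (fun x => f (c t x)), ?_, ?_, ?_⟩, ?_⟩
  · intro t a b hab
    match a, b with
    | none, none => rfl
    | none, some x => exact absurd hab.symm (hfw _)
    | some x, none => exact absurd hab (hfw _)
    | some x, some y => simp only [Option.elim] at hab; rw [hinj t (f.injective hab)]
  · intro t u v
    match u, v with
    | none, _ =>
      simp only [addIsolated_adj_iff]
      constructor
      · rintro ⟨x, y, h, -⟩; exact absurd h (by simp)
      · intro h
        obtain ⟨a, b, -, ha, -⟩ := (SimpleGraph.map_adj ..).mp h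
        exact absurd ha (hfw a)
    | _, none =>
      simp only [addIsolated_adj_iff]
      constructor
      · rintro ⟨x, y, -, h, -⟩; exact absurd h (by simp)
      · intro h
        obtain ⟨a, b, -, -, hb⟩ := (SimpleGraph.map_adj ..).mp h
        exact absurd hb (hfw b)
    | some x, some y =>
      rw [addIsolated_adj_some]
      simp only [Option.elim]
      rw [SimpleGraph.map_adj_apply]
      exact hadj t x y
  · intro e he
    rw [edgeSet_map', Set.mem_image] at he
    obtain ⟨e₀, he₀, rfl⟩ := he
    obtain ⟨t, ⟨u, v, huv, hev⟩, huniq⟩ := hcov e₀ he₀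
    refine ⟨t, ⟨some u, some v, (addIsolated_adj_some F u v).mpr huv, ?_⟩, ?_⟩
    · rw [hev]; rfl
    · rintro t' ⟨a, b, hab, heab⟩
      obtain ⟨x, y, rfl, rfl, hxy⟩ := (addIsolated_adj_iff F a b).mp hab
      apply huniq t'
      exact ⟨x, y, hxy, Sym2.map.injective f.injective heab⟩
  · rw [edgeSet_map', Set.ncard_image_of_injective _ (Sym2.map.injective f.injective)]

/-- If `F'` is obtained from `F` by adding an isolated vertex, then for every
`n ≥ |V(F')|` we have `cex(n,F) ≤ cex(n,F') ≤ cex(n-1,F) + n - 1`. -/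
theorem cex_addIsolated_bounds {V : Type} [Fintype V] (F : SimpleGraph V)
    (n : ℕ) (hn : Fintype.card V + 1 ≤ n) :
    cex F n ≤ cex (addIsolated F) n ∧
    cex (addIsolated F) n ≤ cex F (n - 1) + (n - 1) := by
  have hn1 : 1 ≤ n := by omega
  have h1 := exInd_addIsolated_le F n
  have h2 := exInd_pred_le F n hn1
  have h3 := exInd_le_choose F (n - 1)
  have h4 : n.choose 2 = (n - 1).choose 2 + (n - 1) := by
    obtain ⟨m, rfl⟩ : ∃ m, n = m + 1 := ⟨n - 1, by omega⟩
    simp [Nat.choose_succ_succ, Nat.choose_one_right, Nat.add_comm]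
  unfold cex
  omega
end

section
/- If F is a graph with no isolated vertices that is not a complete graph, then cex(n,F) = Ω(n); that is, there exist a constant c > 0 and N such that cex(n,F) ≥ c·n for all n ≥ N. -/
open SimpleGraph Finset

lemma ncard_edgeSet_eq {W : Type*} (G : SimpleGraph W) [Fintype G.edgeSet] :
    G.edgeSet.ncard = G.edgeFinset.card := by
  rw [← coe_edgeFinset, Set.ncard_coe_finset]

lemma aux_key2 {n : ℕ} (G : SimpleGraph (Fin n)) :
    G.edgeSet.ncard + Gᶜ.edgeSet.ncard = n.choose 2 := by
  classical
  rw [← Set.ncard_union_eq (by rw [disjoint_edgeSet]; exact disjoint_compl_right)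
      (Set.toFinite _) (Set.toFinite _), ← edgeSet_sup, sup_compl_eq_top,
    ncard_edgeSet_eq, card_edgeFinset_top_eq_card_choose_two, Fintype.card_fin]

lemma aux_key1 {V : Type} [Fintype V] {F : SimpleGraph V} {x y w : V}
    (hxy : x ≠ y) (hnadj : ¬ F.Adj x y) (hw : F.Adj x w)
    {n : ℕ} (G : SimpleGraph (Fin n)) (hd : HasInducedDecompositionInto F G) :
    G.edgeSet.ncard ≤
      2 * Gᶜ.edgeSet.ncard * (n * (Fintype.card V * Fintype.card V)) := by
  classical
  obtain ⟨ι, c, hinj, hadj, hcov⟩ := hd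
  rcases G.edgeSet.eq_empty_or_nonempty with hE | ⟨e₀, he₀⟩
  · simp [hE]
  haveI : Nonempty ι := ⟨((hcov e₀ he₀).exists).choose⟩
  haveI : Nonempty (Fin n) := ⟨e₀.out.1⟩
  haveI : Nonempty V := ⟨x⟩
  -- choice functions
  set tf : Sym2 (Fin n) → ι := fun e =>
    if he : e ∈ G.edgeSet then (hcov e he).choose else Classical.arbitrary ι with htf
  set uf : Sym2 (Fin n) → V := fun e =>
    if he : e ∈ G.edgeSet then (hcov e he).choose_spec.1.choose else x with huf
  set vf : Sym2 (Fin n) → V := fun e =>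
    if he : e ∈ G.edgeSet then (hcov e he).choose_spec.1.choose_spec.choose else x with hvf
  have hspec : ∀ e, ∀ he : e ∈ G.edgeSet,
      F.Adj (uf e) (vf e) ∧ e = s(c (tf e) (uf e), c (tf e) (vf e)) := by
    intro e he
    simp only [htf, huf, hvf, dif_pos he]
    exact (hcov e he).choose_spec.1.choose_spec.choose_spec
  have huniq : ∀ e, ∀ _ : e ∈ G.edgeSet, ∀ t' : ι,
      (∃ u v, F.Adj u v ∧ e = s(c t' u, c t' v)) → t' = tf e := by
    intro e he t' h
    simp only [htf, dif_pos he]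
    exact (hcov e he).choose_spec.2 t' h
  -- the injection
  set Θ : Sym2 (Fin n) → (Fin n × Fin n) × Fin n × (V × V) := fun e =>
    ((c (tf e) x, c (tf e) y), c (tf e) w, (uf e, vf e)) with hΘ
  have hmaps : ∀ e ∈ G.edgeSet.toFinset,
      Θ e ∈ ((univ : Finset (Fin n × Fin n)).filter fun p => Gᶜ.Adj p.1 p.2) ×ˢ
        (univ : Finset (Fin n)) ×ˢ (univ : Finset (V × V)) := by
    intro e he
    rw [Set.mem_toFinset] at he
    simp only [Finset.mem_product, Finset.mem_filter, Finset.mem_univ, true_and, and_true]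
    exact ⟨(hinj (tf e)).ne hxy, fun h => hnadj ((hadj (tf e) x y).mpr h)⟩
  have hinjOn : Set.InjOn Θ G.edgeSet.toFinset := by
    intro e he e' he' heq
    rw [Finset.mem_coe, Set.mem_toFinset] at he he'
    simp only [hΘ, Prod.mk.injEq] at heq
    obtain ⟨⟨h1, h2⟩, h3, h4, h5⟩ := heq
    have hedge : G.Adj (c (tf e) x) (c (tf e) w) := (hadj (tf e) x w).mp hw
    have hmem : s(c (tf e) x, c (tf e) w) ∈ G.edgeSet := hedge
    have ht : tf e = tf (s(c (tf e) x, c (tf e) w)) :=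
      huniq _ hmem _ ⟨x, w, hw, rfl⟩
    have ht' : tf e' = tf (s(c (tf e) x, c (tf e) w)) :=
      huniq _ hmem _ ⟨x, w, hw, by rw [h1, h3]⟩
    have htt : tf e = tf e' := ht.trans ht'.symm
    rw [(hspec e he).2, (hspec e' he').2, htt, h4, h5]
  have hcard := Finset.card_le_card_of_injOn Θ hmaps hinjOn
  rw [Finset.card_product, Finset.card_product, Finset.card_univ, Finset.card_univ,
    Fintype.card_fin, Fintype.card_prod] at hcard
  have hP : ((univ : Finset (Fin n × Fin n)).filter fun p => Gᶜ.Adj p.1 p.2).card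
      = 2 * Gᶜ.edgeSet.ncard := by
    have := Gᶜ.two_mul_card_edgeFinset
    rw [← coe_edgeFinset, Set.ncard_coe_finset, ← this]
  rw [hP] at hcard
  calc G.edgeSet.ncard = G.edgeSet.toFinset.card := Set.ncard_eq_toFinset_card' _
    _ ≤ 2 * Gᶜ.edgeSet.ncard * (n * (Fintype.card V * Fintype.card V)) := hcard

/-- If `F` has no isolated vertices and is not complete, then `cex(n,F) = Ω(n)`. -/
theorem cex_omega_linear {V : Type} [Fintype V] (F : SimpleGraph V)
    (hiso : ∀ v : V, ∃ u : V, F.Adj v u) (hnc : F ≠ ⊤) :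
    ∃ c : ℝ, 0 < c ∧ ∃ N : ℕ, ∀ n : ℕ, N ≤ n → c * n ≤ (cex F n : ℝ) := by
  classical
  have hex : ∃ x y : V, x ≠ y ∧ ¬ F.Adj x y := by
    by_contra h
    push_neg at h
    apply hnc
    ext u v
    exact ⟨fun ha => ha.ne, fun hne => h u v hne⟩
  obtain ⟨x, y, hxy, hnadj⟩ := hex
  obtain ⟨w, hw⟩ := hiso x
  haveI : Nonempty V := ⟨x⟩
  set k := Fintype.card V with hkdef
  have hk1 : 1 ≤ k := Fintype.card_pos
  refine ⟨1 / (12 * (k * k)), by positivity, 2, fun n hn => ?_⟩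
  set S := {m | ∃ G : SimpleGraph (Fin n), HasInducedDecompositionInto F G ∧
    G.edgeSet.ncard = m} with hSdef
  have hS0 : (0 : ℕ) ∈ S := by
    refine ⟨⊥, ⟨Empty, fun t => t.elim, fun t => t.elim, fun t => t.elim, ?_⟩, by simp⟩
    intro e he
    simp only [edgeSet_bot, Set.mem_empty_iff_false] at he
  have hbdd : BddAbove S := by
    refine ⟨n.choose 2, fun m hm => ?_⟩
    obtain ⟨G, -, rfl⟩ := hm
    rw [ncard_edgeSet_eq]
    calc G.edgeFinset.card ≤ (Fintype.card (Fin n)).choose 2 :=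
          G.card_edgeFinset_le_card_choose_two
      _ = n.choose 2 := by rw [Fintype.card_fin]
  have hmem : sSup S ∈ S := Nat.sSup_mem ⟨0, hS0⟩ hbdd
  obtain ⟨G, hG, hGe⟩ := hmem
  have h1 := aux_key1 hxy hnadj hw G hG
  have h2 := aux_key2 G
  have hexInd : exInd F n = G.edgeSet.ncard := hGe.symm
  have hcex : cex F n = Gᶜ.edgeSet.ncard := by
    have : cex F n = n.choose 2 - exInd F n := rfl
    omega
  rw [hcex]
  -- pass to the reals
  have hA : (n : ℝ) * ((n : ℝ) - 1) / 2 ≤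
      2 * (Gᶜ.edgeSet.ncard : ℝ) * ((n : ℝ) * ((k : ℝ) * k)) + (Gᶜ.edgeSet.ncard : ℝ) := by
    have hchoose : (n.choose 2 : ℝ) = (n : ℝ) * ((n : ℝ) - 1) / 2 := Nat.cast_choose_two (K := ℝ) n
    have h2' : (G.edgeSet.ncard : ℝ) + (Gᶜ.edgeSet.ncard : ℝ) = (n.choose 2 : ℝ) := by
      exact_mod_cast congrArg (Nat.cast : ℕ → ℝ) h2
    have h1' : (G.edgeSet.ncard : ℝ) ≤
        2 * (Gᶜ.edgeSet.ncard : ℝ) * ((n : ℝ) * ((k : ℝ) * k)) := by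
      exact_mod_cast h1
    rw [← hchoose, ← h2']
    linarith
  have hkR : (1 : ℝ) ≤ (k : ℝ) := by exact_mod_cast hk1
  have hnR : (2 : ℝ) ≤ (n : ℝ) := by exact_mod_cast hn
  have hmR : (0 : ℝ) ≤ (Gᶜ.edgeSet.ncard : ℝ) := by positivity
  set m : ℝ := (Gᶜ.edgeSet.ncard : ℝ)
  set kR : ℝ := (k : ℝ)
  rw [div_mul_eq_mul_div, one_mul, div_le_iff₀ (by positivity)]
  have hk0 : (0:ℝ) ≤ kR * kR := by positivity
  have hn0 : (0:ℝ) ≤ (n : ℝ) := by linarith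
  have hscaled := mul_le_mul_of_nonneg_right hA (by linarith : (0:ℝ) ≤ 12*(kR*kR))
  nlinarith [hscaled, mul_nonneg (mul_nonneg hk0 hn0) (by linarith : (0:ℝ) ≤ (n:ℝ) - 2),
    mul_nonneg hn0 (by nlinarith : (0:ℝ) ≤ kR*kR - 1),
    (by positivity : (0:ℝ) < 2*(n:ℝ)*(kR*kR)+1)]
end
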